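/- Let 0 < q_{l,0} ≤ q_{h,0} ≤ 1, set U_{l,0} = U_l(q_{l,0}, q_{h,0}), U_{h,0} = U_h(q_{l,0}, q_{h,0}), and ρ_0 = q_{l,0}/q_{h,0}. Suppose ρ* ∈ [0, 1] maximizes the function q_l ↦ (U_l(q_l, 1) − U_{l,0})·(U_h(q_l, 1) − U_{h,0}) over the set {q_l ∈ [0, 1] : U_l(q_l, 1) ≥ U_{l,0} and U_h(q_l, 1) ≥ U_{h,0}}, and suppose ρ_0 ≤ ρ*. Then (4 − 5·ρ*)·log₁₀(1/q_{h,0}) ≥ ρ* − ρ_0. -/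

import Mathlib

/-!
Scaling both qualities by `q_{h,0}` scales both utilities by `q_{h,0}`, so the disagreement
point is `(c₁, c₂) = q_{h,0} • (U_l(ρ₀, 1), U_h(ρ₀, 1))`. If `q_{h,0} < 1` the Nash product is
positive somewhere on the feasible set, so `ρ*` is an interior local maximum and satisfies the
first-order condition `(4 - 7ρ*)(U_h(ρ*, 1) - c₂) = (8 + 4ρ*)(U_l(ρ*, 1) - c₁)`. This forces
`ρ* < 4/7`, and after clearing denominators it reads `(1 - q_{h,0}) E = (ρ* - ρ₀) W` for explicit
polynomials `E`, `W` in `(ρ₀, ρ*)` with `W > 0` and `2.303 E ≤ (4 - 5ρ*) W`. Hence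
`2.303 (ρ* - ρ₀) ≤ (4 - 5ρ*)(1 - q_{h,0}) ≤ (4 - 5ρ*) ln(1 / q_{h,0})`, and `ln 10 < 2.303`
converts `ln` into `log₁₀`. If `q_{h,0} = 1`, then `U_h(·, 1)` is decreasing, so `ρ* = ρ₀`.
-/

/-- Low-quality firm's equilibrium utility. -/
noncomputable def Ul (ql qh : ℝ) : ℝ := ql * qh * (qh - ql) / (4 * qh - ql) ^ 2

/-- High-quality firm's equilibrium utility. -/
noncomputable def Uh (ql qh : ℝ) : ℝ := 4 * qh ^ 2 * (qh - ql) / (4 * qh - ql) ^ 2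

open Set

lemma Ul_one (x : ℝ) : Ul x 1 = x * (1 - x) / (4 - x) ^ 2 := by
  simp only [Ul]; ring

lemma Uh_one (x : ℝ) : Uh x 1 = 4 * (1 - x) / (4 - x) ^ 2 := by
  simp only [Uh]; ring

lemma Ul_eq_mul_Ul_div (ql qh : ℝ) : Ul ql qh = qh * Ul (ql / qh) 1 := by
  rcases eq_or_ne qh 0 with rfl | hqh
  · simp [Ul]
  · rw [Ul_one, Ul]
    field_simp

lemma Uh_eq_mul_Uh_div (ql qh : ℝ) : Uh ql qh = qh * Uh (ql / qh) 1 := by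
  rcases eq_or_ne qh 0 with rfl | hqh
  · simp [Uh]
  · rw [Uh_one, Uh]
    field_simp

lemma Ul_one_nonneg {x : ℝ} (h0 : 0 ≤ x) (h1 : x ≤ 1) : 0 ≤ Ul x 1 := by
  rw [Ul_one]
  have : 0 ≤ 1 - x := sub_nonneg.2 h1
  positivity

lemma Uh_one_nonneg {x : ℝ} (h1 : x ≤ 1) : 0 ≤ Uh x 1 := by
  rw [Uh_one]
  have : 0 ≤ 1 - x := sub_nonneg.2 h1
  positivity

lemma Ul_one_pos {x : ℝ} (h0 : 0 < x) (h1 : x < 1) : 0 < Ul x 1 := by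
  rw [Ul_one]
  exact div_pos (mul_pos h0 (sub_pos.2 h1)) (pow_pos (by linarith) 2)

lemma Uh_one_pos {x : ℝ} (h1 : x < 1) : 0 < Uh x 1 := by
  rw [Uh_one]
  exact div_pos (mul_pos four_pos (sub_pos.2 h1)) (pow_pos (by linarith) 2)

lemma hasDerivAt_Ul_one {x : ℝ} (hx : x ≠ 4) :
    HasDerivAt (fun y => Ul y 1) ((4 - 7 * x) / (4 - x) ^ 3) x := by
  have h4 : 4 - x ≠ 0 := sub_ne_zero.2 hx.symm
  have h := ((hasDerivAt_id' x).fun_mul ((hasDerivAt_id' x).const_sub 1)).fun_div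
    (((hasDerivAt_id' x).const_sub 4).fun_pow 2) (pow_ne_zero 2 h4)
  rw [funext Ul_one]
  refine h.congr_deriv ?_
  field_simp
  ring

lemma hasDerivAt_Uh_one {x : ℝ} (hx : x ≠ 4) :
    HasDerivAt (fun y => Uh y 1) (-(8 + 4 * x) / (4 - x) ^ 3) x := by
  have h4 : 4 - x ≠ 0 := sub_ne_zero.2 hx.symm
  have h := (((hasDerivAt_id' x).const_sub 1).const_mul 4).fun_div
    (((hasDerivAt_id' x).const_sub 4).fun_pow 2) (pow_ne_zero 2 h4)
  rw [funext Uh_one]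
  refine h.congr_deriv ?_
  field_simp
  ring

lemma strictAntiOn_Uh_one : StrictAntiOn (fun x => Uh x 1) (Ioo (-2) 4) := by
  refine strictAntiOn_of_deriv_neg (convex_Ioo _ _)
    (fun x hx => (hasDerivAt_Uh_one hx.2.ne).continuousAt.continuousWithinAt) fun x hx => ?_
  rw [interior_Ioo] at hx
  rw [(hasDerivAt_Uh_one hx.2.ne).deriv]
  have h2 : 0 < 8 + 4 * x := by linarith [hx.1]
  have h4 : 0 < 4 - x := sub_pos.2 hx.2
  exact div_neg_of_neg_of_pos (neg_neg_of_pos h2) (pow_pos h4 3)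

noncomputable def nashProduct (c₁ c₂ x : ℝ) : ℝ := (Ul x 1 - c₁) * (Uh x 1 - c₂)

def bargainingSet (c₁ c₂ : ℝ) : Set ℝ := {x | x ∈ Icc 0 1 ∧ Ul x 1 ≥ c₁ ∧ Uh x 1 ≥ c₂}

section Bargaining

variable {c₁ c₂ r : ℝ}

lemma lt_Ul_and_lt_Uh_of_nashProduct_pos (hr : r ∈ bargainingSet c₁ c₂)
    (h : 0 < nashProduct c₁ c₂ r) : c₁ < Ul r 1 ∧ c₂ < Uh r 1 := by
  have h₁ : 0 ≤ Ul r 1 - c₁ := sub_nonneg.2 hr.2.1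
  have h₂ : 0 ≤ Uh r 1 - c₂ := sub_nonneg.2 hr.2.2
  exact ⟨sub_pos.1 (pos_of_mul_pos_left h h₂), sub_pos.1 (pos_of_mul_pos_right h h₁)⟩

lemma mem_Ioo_of_lt_Ul_of_lt_Uh (hc₁ : 0 ≤ c₁) (hc₂ : 0 ≤ c₂) (hr : r ∈ Icc 0 1)
    (h₁ : c₁ < Ul r 1) (h₂ : c₂ < Uh r 1) : r ∈ Ioo 0 1 := by
  refine ⟨hr.1.lt_of_ne ?_, hr.2.lt_of_ne ?_⟩
  · rintro rfl
    linarith [show Ul 0 1 = 0 by simp [Ul]]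
  · rintro rfl
    linarith [show Uh 1 1 = 0 by simp [Uh]]

lemma IsMaxOn.isLocalMax_nashProduct
    (hmax : IsMaxOn (nashProduct c₁ c₂) (bargainingSet c₁ c₂) r)
    (hr : r ∈ Ioo 0 1) (h₁ : c₁ < Ul r 1) (h₂ : c₂ < Uh r 1) :
    IsLocalMax (nashProduct c₁ c₂) r := by
  have hr4 : r ≠ 4 := by linarith [hr.2]
  filter_upwards [Icc_mem_nhds hr.1 hr.2,
    (hasDerivAt_Ul_one hr4).continuousAt.eventually (lt_mem_nhds h₁),
    (hasDerivAt_Uh_one hr4).continuousAt.eventually (lt_mem_nhds h₂)] with x hx hx₁ hx₂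
  exact isMaxOn_iff.1 hmax x ⟨hx, hx₁.le, hx₂.le⟩

lemma IsLocalMax.nashProduct_foc (h : IsLocalMax (nashProduct c₁ c₂) r) (hr : r ≠ 4) :
    (4 - 7 * r) * (Uh r 1 - c₂) = (8 + 4 * r) * (Ul r 1 - c₁) := by
  have h4 : 4 - r ≠ 0 := sub_ne_zero.2 hr.symm
  have hd := h.hasDerivAt_eq_zero
    (((hasDerivAt_Ul_one hr).sub_const c₁).mul ((hasDerivAt_Uh_one hr).sub_const c₂))
  field_simp at hd
  linarith

end Bargaining

lemma ratio_gain_of_foc {a r q : ℝ} (ha : 0 ≤ a) (har : a ≤ r) (hr : 7 * r < 4) (hq : q ≤ 1)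
    (hfoc : (4 - 7 * r) * (Uh r 1 - q * Uh a 1) = (8 + 4 * r) * (Ul r 1 - q * Ul a 1)) :
    2303 * (r - a) ≤ 1000 * (4 - 5 * r) * (1 - q) := by
  have hy : 0 ≤ r - a := sub_nonneg.2 har
  have hz : 0 ≤ 4 - 7 * r := by linarith
  have hgap : (1 - q) * ((1 - a) * (4 - 7 * r - 2 * a - a * r) * (4 - r) ^ 2) =
      (r - a) *
        ((1 - r) * (2 + r) * (4 - a) ^ 2 + (4 - 7 * r - 2 * a - a * r) * (8 + r + a - a * r)) := by
    have h4r : 4 - r ≠ 0 := by linarith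
    have h4a : 4 - a ≠ 0 := by linarith
    rw [Ul_one, Ul_one, Uh_one, Uh_one] at hfoc
    field_simp at hfoc
    linear_combination hfoc / 4
  have hW :
      0 < (1 - r) * (2 + r) * (4 - a) ^ 2 + (4 - 7 * r - 2 * a - a * r) * (8 + r + a - a * r) := by
    nlinarith [mul_nonneg ha hy, mul_pos (sub_pos.2 hr) (sub_pos.2 hr)]
  have hEW : 2303 * ((1 - a) * (4 - 7 * r - 2 * a - a * r) * (4 - r) ^ 2) ≤
      1000 * (4 - 5 * r) *
        ((1 - r) * (2 + r) * (4 - a) ^ 2 + (4 - 7 * r - 2 * a - a * r) * (8 + r + a - a * r)) := by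
    -- all cubic monomials in the nonnegative quantities `a`, `r - a`, `4 - 7r`
    nlinarith [mul_nonneg (mul_nonneg ha ha) ha, mul_nonneg (mul_nonneg ha ha) hy,
      mul_nonneg (mul_nonneg ha ha) hz, mul_nonneg (mul_nonneg ha hy) hy,
      mul_nonneg (mul_nonneg ha hy) hz, mul_nonneg (mul_nonneg ha hz) hz,
      mul_nonneg (mul_nonneg hy hy) hy, mul_nonneg (mul_nonneg hy hy) hz,
      mul_nonneg (mul_nonneg hy hz) hz, mul_nonneg (mul_nonneg hz hz) hz]
  refine le_of_mul_le_mul_right ?_ hW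
  nlinarith [mul_le_mul_of_nonneg_left hEW (sub_nonneg.2 hq)]

lemma log_ten_lt : Real.log 10 < 2303 / 1000 := by
  linarith [Real.log_ten_eq, Real.log_two_lt_d9, Real.log_five_lt_d9]

lemma one_sub_le_logb_ten_one_div {q : ℝ} (hq0 : 0 < q) (hq1 : q ≤ 1) :
    1000 * (1 - q) ≤ 2303 * Real.logb 10 (1 / q) := by
  have hlog : 1 - q ≤ Real.log (1 / q) := by
    simpa using Real.one_sub_inv_le_log_of_pos (one_div_pos.2 hq0)
  have h10 : 0 < Real.log 10 := Real.log_pos (by norm_num)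
  rw [Real.logb, mul_div_assoc', le_div_iff₀ h10]
  nlinarith [log_ten_lt]

lemma exists_nashProduct_pos {q a : ℝ} (hq1 : q < 1) (ha0 : 0 < a) (ha1 : a ≤ 1) :
    ∃ x ∈ bargainingSet (q * Ul a 1) (q * Uh a 1),
      0 < nashProduct (q * Ul a 1) (q * Uh a 1) x := by
  rcases ha1.lt_or_eq with ha1 | rfl
  · have hl := Ul_one_pos ha0 ha1
    have hh := Uh_one_pos ha1
    refine ⟨a, ⟨⟨ha0.le, ha1.le⟩, mul_le_of_le_one_left hl.le hq1.le,
      mul_le_of_le_one_left hh.le hq1.le⟩, ?_⟩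
    have hprod : nashProduct (q * Ul a 1) (q * Uh a 1) a = (1 - q) ^ 2 * (Ul a 1 * Uh a 1) := by
      simp only [nashProduct]; ring
    have hq : 0 < 1 - q := sub_pos.2 hq1
    rw [hprod]
    positivity
  · refine ⟨1 / 2, ⟨⟨by norm_num, by norm_num⟩, ?_, ?_⟩, ?_⟩ <;> norm_num [Ul, Uh, nashProduct]

theorem sufficient_ratio_gain
    (ql0 qh0 ρstar : ℝ)
    (hql0 : 0 < ql0) (h0 : ql0 ≤ qh0) (hqh0 : qh0 ≤ 1)
    (hmem : ρstar ∈ {ql : ℝ | ql ∈ Set.Icc (0 : ℝ) 1 ∧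
      Ul ql 1 ≥ Ul ql0 qh0 ∧ Uh ql 1 ≥ Uh ql0 qh0})
    (hmax : ∀ ql ∈ {ql : ℝ | ql ∈ Set.Icc (0 : ℝ) 1 ∧
      Ul ql 1 ≥ Ul ql0 qh0 ∧ Uh ql 1 ≥ Uh ql0 qh0},
      (Ul ql 1 - Ul ql0 qh0) * (Uh ql 1 - Uh ql0 qh0)
        ≤ (Ul ρstar 1 - Ul ql0 qh0) * (Uh ρstar 1 - Uh ql0 qh0))
    (hρ : ql0 / qh0 ≤ ρstar) :
    (4 - 5 * ρstar) * Real.logb 10 (1 / qh0) ≥ ρstar - ql0 / qh0 := by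
  have hqh : 0 < qh0 := hql0.trans_le h0
  have ha : 0 < ql0 / qh0 := div_pos hql0 hqh
  have ha1 : ql0 / qh0 ≤ 1 := (div_le_one hqh).2 h0
  rw [Ul_eq_mul_Ul_div ql0 qh0, Uh_eq_mul_Uh_div ql0 qh0] at hmem hmax
  set a := ql0 / qh0
  rcases hqh0.lt_or_eq with hq1 | rfl
  · obtain ⟨x, hx, hxpos⟩ := exists_nashProduct_pos hq1 ha ha1
    obtain ⟨h₁, h₂⟩ := lt_Ul_and_lt_Uh_of_nashProduct_pos hmem (hxpos.trans_le (hmax x hx))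
    have hr := mem_Ioo_of_lt_Ul_of_lt_Uh (mul_nonneg hqh.le (Ul_one_nonneg ha.le ha1))
      (mul_nonneg hqh.le (Uh_one_nonneg ha1)) hmem.1 h₁ h₂
    have hfoc :=
      (IsMaxOn.isLocalMax_nashProduct hmax hr h₁ h₂).nashProduct_foc (by linarith [hr.2])
    have h7 : 7 * ρstar < 4 := by nlinarith [sub_pos.2 h₁, sub_pos.2 h₂]
    have hgain := ratio_gain_of_foc ha.le hρ h7 hq1.le hfoc
    have hlog := one_sub_le_logb_ten_one_div hqh hq1.le
    linarith [mul_le_mul_of_nonneg_left hlog (show 0 ≤ 4 - 5 * ρstar by linarith)]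
  · have hra : ρstar ≤ a := by
      have := hmem.2.2
      rw [one_mul] at this
      exact (strictAntiOn_Uh_one.le_iff_ge ⟨by linarith, by linarith⟩
        ⟨by linarith [hmem.1.1], by linarith [hmem.1.2]⟩).1 this
    simp [le_antisymm hra hρ]
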